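/- arXiv:1804.09600 — 2 statements merged into one kernel-verified Lean document; each statement's English description precedes it below -/
import Mathlib

section
/- The restriction of the symmetrization map π_n to D^n, where D ⊆ ℂ is a domain, is a proper map onto its image S_n(D): preimages of compact subsets of S_n(D) are compact in D^n. -/
/-- The symmetrization map `π_n : ℂ^n → ℂ^n`, whose `j`-th coordinate is the
`(j+1)`-st elementary symmetric polynomial of the entries. -/
noncomputable def symPoly (n : ℕ) (lam : Fin n → ℂ) : Fin n → ℂ :=
  fun j => ∑ t ∈ Finset.powersetCard ((j : ℕ) + 1) Finset.univ, ∏ i ∈ t, lam i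

/-- The `n`-fold symmetric product `S_n(D) = π_n(D^n)` of a planar set `D`. -/
noncomputable def symProd (n : ℕ) (D : Set ℂ) : Set (Fin n → ℂ) :=
  symPoly n '' {lam | ∀ i, lam i ∈ D}

open Polynomial in
lemma symPoly_eq_esymm (n : ℕ) (a : Fin n → ℂ) (j : Fin n) :
    (Multiset.map a Finset.univ.val).esymm ((j : ℕ) + 1) = symPoly n a j :=
  Finset.esymm_map_val a Finset.univ ((j : ℕ) + 1)

lemma card_map_univ (n : ℕ) (a : Fin n → ℂ) :
    Multiset.card (Multiset.map a Finset.univ.val) = n := by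
  simp

open Polynomial in
/-- If two tuples have the same elementary symmetric polynomials, they define the
same multiset. -/
lemma multiset_eq_of_symPoly_eq {n : ℕ} {a b : Fin n → ℂ}
    (h : symPoly n a = symPoly n b) :
    Multiset.map a Finset.univ.val = Multiset.map b Finset.univ.val := by
  have hP : ((Multiset.map a Finset.univ.val).map fun t => X - C t).prod =
      ((Multiset.map b Finset.univ.val).map fun t => X - C t).prod := by
    rw [Multiset.prod_X_sub_X_eq_sum_esymm, Multiset.prod_X_sub_X_eq_sum_esymm,
      card_map_univ, card_map_univ]
    refine Finset.sum_congr rfl fun j hj => ?_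
    rcases Nat.eq_zero_or_pos j with rfl | hj0
    · simp [Multiset.esymm]
    · have hjn : j - 1 < n := by
        have := Finset.mem_range.mp hj
        omega
      have hj1 : j = ((⟨j - 1, hjn⟩ : Fin n) : ℕ) + 1 := by simp; omega
      rw [hj1, symPoly_eq_esymm, symPoly_eq_esymm, h]
  have := congrArg Polynomial.roots hP
  rwa [Polynomial.roots_multiset_prod_X_sub_C, Polynomial.roots_multiset_prod_X_sub_C] at this

lemma mem_of_symPoly_mem_symProd {n : ℕ} {D : Set ℂ} {a : Fin n → ℂ}
    (h : symPoly n a ∈ symProd n D) : ∀ i, a i ∈ D := by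
  obtain ⟨b, hb, hEq⟩ := h
  intro i
  have hmem : a i ∈ Multiset.map a Finset.univ.val :=
    Multiset.mem_map.mpr ⟨i, Finset.mem_val.mpr (Finset.mem_univ i), rfl⟩
  rw [multiset_eq_of_symPoly_eq hEq.symm] at hmem
  obtain ⟨k, _, hk⟩ := Multiset.mem_map.mp hmem
  exact hk ▸ hb k

open Polynomial in
/-- Each entry of `a` is a root of the monic polynomial with coefficients
(up to sign) given by `symPoly n a`, hence satisfies the Cauchy bound. -/
lemma norm_entry_le {n : ℕ} (M : ℝ) (hM : 0 ≤ M) {a : Fin n → ℂ}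
    (hbound : ∀ j, ‖symPoly n a j‖ ≤ M) (i : Fin n) : ‖a i‖ ≤ M + 1 := by
  have hmonic : (((Multiset.map a Finset.univ.val).map fun t => X - C t).prod).Monic :=
    monic_multiset_prod_of_monic _ _ fun t _ => monic_X_sub_C t
  have hroot : (((Multiset.map a Finset.univ.val).map fun t => X - C t).prod).IsRoot (a i) := by
    apply isRoot_of_mem_roots
    rw [Polynomial.roots_multiset_prod_X_sub_C]
    exact Multiset.mem_map.mpr ⟨i, Finset.mem_val.mpr (Finset.mem_univ i), rfl⟩
  have hd : (((Multiset.map a Finset.univ.val).map fun t => X - C t).prod).natDegree = n := by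
    rw [natDegree_multiset_prod_of_monic _ fun f hf => ?_]
    · simp [Multiset.map_map, Function.comp_def]
    · obtain ⟨t, _, rfl⟩ := Multiset.mem_map.mp hf
      exact monic_X_sub_C t
  -- bound coefficients
  have hcoeff : ∀ k, k < n →
      ‖(((Multiset.map a Finset.univ.val).map fun t => X - C t).prod).coeff k‖ ≤ M := by
    intro k hk
    have hk' : k ≤ Multiset.card (Multiset.map a Finset.univ.val) := by
      rw [card_map_univ]; omega
    rw [Multiset.prod_X_sub_C_coeff _ hk', card_map_univ]
    have hnk : n - k - 1 < n := by omega
    have heq : n - k = ((⟨n - k - 1, hnk⟩ : Fin n) : ℕ) + 1 := by simp; omega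
    rw [heq, symPoly_eq_esymm]
    calc ‖(-1 : ℂ) ^ (((⟨n - k - 1, hnk⟩ : Fin n) : ℕ) + 1) * symPoly n a ⟨n - k - 1, hnk⟩‖
        = ‖symPoly n a ⟨n - k - 1, hnk⟩‖ := by
          rw [norm_mul, norm_pow, norm_neg, norm_one, one_pow, one_mul]
      _ ≤ M := hbound _
  -- Cauchy bound
  have hcb : (((Multiset.map a Finset.univ.val).map fun t => X - C t).prod).cauchyBound
      ≤ M.toNNReal + 1 := by
    unfold Polynomial.cauchyBound
    rw [hmonic.leadingCoeff, nnnorm_one, div_one]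
    gcongr
    refine Finset.sup_le fun k hk => ?_
    have hk' : k < n := hd ▸ Finset.mem_range.mp hk
    exact (Real.le_toNNReal_iff_coe_le hM).mpr (hcoeff k hk')
  have hlt := hroot.norm_lt_cauchyBound hmonic.ne_zero
  have h2 : (‖a i‖₊ : ℝ) < ((M.toNNReal + 1 : NNReal) : ℝ) := by
    exact_mod_cast lt_of_lt_of_le hlt hcb
  rw [coe_nnnorm, NNReal.coe_add, NNReal.coe_one, Real.coe_toNNReal M hM] at h2
  linarith

lemma continuous_symPoly (n : ℕ) : Continuous (symPoly n) := by
  refine continuous_pi fun j => ?_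
  exact continuous_finset_sum _ fun t _ => continuous_finset_prod _ fun i _ => continuous_apply i

/-- The restriction of `π_n` to `D^n` is proper onto its image `S_n(D)`:
preimages of compact subsets of `S_n(D)` are compact in `D^n`. -/
theorem symPoly_proper_onto_image (n : ℕ) (D : Set ℂ)
    (hDopen : IsOpen D) (hDconn : IsConnected D) :
    ∀ K : Set (Fin n → ℂ), K ⊆ symProd n D → IsCompact K →
      IsCompact (symPoly n ⁻¹' K ∩ {lam | ∀ i, lam i ∈ D}) := by
  intro K hKsub hKcomp
  have hsub : symPoly n ⁻¹' K ⊆ {lam | ∀ i, lam i ∈ D} := by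
    intro a ha
    exact mem_of_symPoly_mem_symProd (hKsub ha)
  rw [Set.inter_eq_self_of_subset_left hsub]
  -- closedness
  have hclosed : IsClosed (symPoly n ⁻¹' K) :=
    hKcomp.isClosed.preimage (continuous_symPoly n)
  -- boundedness
  obtain ⟨M, hM0, hM⟩ : ∃ M, 0 ≤ M ∧ ∀ y ∈ K, ‖y‖ ≤ M := by
    obtain ⟨M, hM⟩ := hKcomp.isBounded.exists_norm_le
    exact ⟨max M 0, le_max_right _ _, fun y hy => (hM y hy).trans (le_max_left _ _)⟩
  refine IsCompact.of_isClosed_subset (isCompact_closedBall (0 : Fin n → ℂ) (M + 1))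
    hclosed ?_
  intro a ha
  rw [Metric.mem_closedBall, dist_zero_right]
  refine pi_norm_le_iff_of_nonneg (by linarith) |>.mpr fun i => ?_
  refine norm_entry_le M hM0 (fun j => ?_) i
  exact (norm_le_pi_norm (symPoly n a) j).trans (hM _ ha)
end

section
/- For every domain D ⊆ ℂ and n ≥ 2, the domain S_n(D) ⊆ ℂ^n is linearly convex: for every point w ∈ ℂ^n \ S_n(D) there exists a complex affine hyperplane through w disjoint from S_n(D). -/
/-!
A point `w` is `π_n(μ)` for the roots `μ` of the monic polynomial
`p_w(z) = z^n - w₁ z^{n-1} + w₂ z^{n-2} - ⋯ + (-1)^n wₙ`, and `p_{π_n(λ)}(z) = ∏ (z - λᵢ)`.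
If `w ∉ S_n(D)`, some root `ζ` of `p_w` lies outside `D`. The condition `p_v(ζ) = 0` is affine
in `v`, so it cuts out a complex hyperplane through `w`; for `v = π_n(λ)` with all `λᵢ ∈ D` it
would force some `λᵢ = ζ`, so the hyperplane misses `S_n(D)`.
-/

open Polynomial

theorem Multiset.exists_univ_map_eq_of_card_eq {α : Type*} {s : Multiset α} {n : ℕ}
    (h : Multiset.card s = n) : ∃ f : Fin n → α, Finset.univ.val.map f = s := by
  subst h
  induction s using Quotient.inductionOn with
  | h l => exact ⟨l.get, (Fin.univ_val_map _).trans (congrArg _ (List.ofFn_get l))⟩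

section Vieta

variable {R : Type*} [CommRing R]

noncomputable def vietaPoly {n : ℕ} (w : Fin n → R) : R[X] :=
  X ^ n + ∑ j : Fin n, C ((-1) ^ ((j : ℕ) + 1) * w j) * X ^ (n - 1 - (j : ℕ))

/-- `p_w(z) = z^n + ∑ j, vietaNormal n z j * w j`, so `{w | p_w(z) = 0}` is an affine
hyperplane with normal `vietaNormal n z`. -/
def vietaNormal (n : ℕ) (z : R) : Fin n → R :=
  fun j => (-1) ^ ((j : ℕ) + 1) * z ^ (n - 1 - (j : ℕ))

lemma degree_vietaPoly_sub_X_pow_lt {n : ℕ} (w : Fin n → R) :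
    (vietaPoly w - X ^ n).degree < (n : WithBot ℕ) := by
  rw [vietaPoly, add_sub_cancel_left]
  refine (degree_sum_le _ _).trans_lt
    ((Finset.sup_lt_iff (WithBot.bot_lt_coe n)).2 fun j _ => ?_)
  exact (degree_C_mul_X_pow_le _ _).trans_lt
    (WithBot.coe_lt_coe.2 (show n - 1 - (j : ℕ) < n by omega))

lemma vietaPoly_monic {n : ℕ} (w : Fin n → R) : (vietaPoly w).Monic := by
  simpa using monic_X_pow_add (degree_vietaPoly_sub_X_pow_lt w)

lemma natDegree_vietaPoly [Nontrivial R] {n : ℕ} (w : Fin n → R) :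
    (vietaPoly w).natDegree = n := by
  have h := natDegree_add_eq_left_of_degree_lt
    ((degree_vietaPoly_sub_X_pow_lt w).trans_eq (degree_X_pow n).symm)
  rwa [add_sub_cancel, natDegree_X_pow] at h

lemma coeff_vietaPoly {n : ℕ} (w : Fin n → R) (j : Fin n) :
    (vietaPoly w).coeff (n - 1 - j) = (-1) ^ ((j : ℕ) + 1) * w j := by
  rw [vietaPoly, coeff_add, coeff_X_pow, if_neg (by omega), zero_add, finsetSum_coeff,
    Finset.sum_eq_single j]
  · rw [coeff_C_mul_X_pow, if_pos rfl]
  · intro k _ hkj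
    rw [coeff_C_mul_X_pow, if_neg (by omega)]
  · simp

lemma vietaNormal_ne_zero [Nontrivial R] {n : ℕ} (hn : 0 < n) (z : R) :
    vietaNormal n z ≠ 0 := by
  intro h
  have h_last := congrFun h ⟨n - 1, by omega⟩
  simp only [vietaNormal, Pi.zero_apply, Nat.sub_self, pow_zero, mul_one] at h_last
  exact ((isUnit_neg_one (α := R)).pow _).ne_zero h_last

end Vieta

lemma esymm_univ_map_eq_symPoly {n : ℕ} (lam : Fin n → ℂ) (j : Fin n) :
    (Finset.univ.val.map lam).esymm (j + 1) = symPoly n lam j :=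
  Finset.esymm_map_val lam _ _

lemma symPoly_surjective (n : ℕ) : Function.Surjective (symPoly n) := by
  intro w
  have hsplit : (vietaPoly w).Splits := IsAlgClosed.splits _
  obtain ⟨μ, hμ⟩ := Multiset.exists_univ_map_eq_of_card_eq
    ((splits_iff_card_roots.1 hsplit).trans (natDegree_vietaPoly w))
  refine ⟨μ, funext fun j => ?_⟩
  have hcoeff := coeff_eq_esymm_roots_of_splits hsplit (k := n - 1 - j)
    (by rw [natDegree_vietaPoly]; omega)
  rw [coeff_vietaPoly, (vietaPoly_monic w).leadingCoeff, natDegree_vietaPoly,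
    show n - (n - 1 - j) = j + 1 by omega, ← hμ, esymm_univ_map_eq_symPoly, one_mul] at hcoeff
  exact (mul_left_cancel₀ (pow_ne_zero _ (neg_ne_zero.2 one_ne_zero)) hcoeff).symm

lemma sum_vietaNormal_mul_symPoly {n : ℕ} (lam : Fin n → ℂ) (z : ℂ) :
    ∑ j, vietaNormal n z j * symPoly n lam j = ∏ i, (z - lam i) - z ^ n := by
  have h := congrArg (eval z) (Multiset.prod_X_sub_X_eq_sum_esymm (Finset.univ.val.map lam))
  rw [Multiset.map_map, ← Finset.prod_eq_multiset_prod, Multiset.card_map, Finset.card_val,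
    Finset.card_univ, Fintype.card_fin, Finset.sum_range_succ'] at h
  simp only [Function.comp_apply, eval_prod, eval_sub, eval_X, eval_C, eval_add, eval_finsetSum,
    eval_mul, eval_pow, eval_neg, eval_one, Finset.esymm_map_val, Finset.powersetCard_zero,
    Finset.sum_singleton, Finset.prod_empty, pow_zero, one_mul, Nat.sub_zero] at h
  rw [h, add_sub_cancel_right, ← Fin.sum_univ_eq_sum_range]
  refine Finset.sum_congr rfl fun j _ => ?_
  rw [vietaNormal, symPoly, Nat.sub_sub, Nat.add_comm 1]
  ring

theorem symProd_linearly_convex_general (n : ℕ) (D : Set ℂ) :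
    ∀ w : Fin n → ℂ, w ∉ symProd n D →
      ∃ a : Fin n → ℂ, a ≠ 0 ∧ ∃ b : ℂ,
        (∑ i, a i * w i) = b ∧ ∀ v ∈ symProd n D, (∑ i, a i * v i) ≠ b := by
  intro w hw
  obtain ⟨μ, rfl⟩ := symPoly_surjective n w
  obtain ⟨i₀, hi₀⟩ : ∃ i, μ i ∉ D := by
    by_contra! h
    exact hw ⟨μ, h, rfl⟩
  refine ⟨vietaNormal n (μ i₀), vietaNormal_ne_zero i₀.pos _, -μ i₀ ^ n, ?_, ?_⟩
  · rw [sum_vietaNormal_mul_symPoly, Finset.prod_eq_zero (Finset.mem_univ i₀) (sub_self _),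
      zero_sub]
  · rintro _ ⟨lam, hlam, rfl⟩ h
    rw [sum_vietaNormal_mul_symPoly, sub_eq_neg_self] at h
    obtain ⟨i, -, hi⟩ := Finset.prod_eq_zero_iff.1 h
    exact hi₀ (sub_eq_zero.1 hi ▸ hlam i)

/-- `S_n(D)` is linearly convex: every point of the complement lies on a
complex affine hyperplane disjoint from `S_n(D)`. -/
theorem symProd_linearly_convex (n : ℕ) (hn : 2 ≤ n) (D : Set ℂ)
    (hDopen : IsOpen D) (hDconn : IsConnected D) :
    ∀ w : Fin n → ℂ, w ∉ symProd n D →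
      ∃ a : Fin n → ℂ, a ≠ 0 ∧ ∃ b : ℂ,
        (∑ i, a i * w i) = b ∧ ∀ v ∈ symProd n D, (∑ i, a i * v i) ≠ b :=
  symProd_linearly_convex_general n D
end
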